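/- arXiv:1403.1741 — 3 statements merged into one kernel-verified Lean document; each statement's English description precedes it below -/
import Mathlib

section
/- Let X be an isotropic Grassmannian of Lie type B or C, i.e. work with Schubert symbols in [1,N] where all cuts are apparent cuts. Suppose (j,c) is a lone star in D(P,T) for Schubert symbols T ≤ P. If c = t_j and t_j is an apparent cut, or if c = p_j and p_j − 1 is an apparent cut, then either N+1−c is a zero column of D(P,T), or t_j = p_j = c. -/
/-!
A lone star at `c = t_j < p_j` (resp. `c = p_j > t_j`) sits strictly inside the
strip `[t_j, p_j)` of row `j`, where no visible cut can occur because both symbols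
are strictly increasing. So the apparent cut at `c` (resp. `c - 1`) is visible
only through its reflection `N - c` (resp. `N + 1 - c`). The isotropy condition
says that `N + 1 - t_j` is not an entry of `T` and `N + 1 - p_j` is not an entry
of `P`, which turns this reflected visible cut into the zero column `N + 1 - c`.
-/

open scoped Classical

/-- `p : ℕ → ℕ` encodes a Schubert symbol `{p 1 < … < p m} ⊆ [1,N]`
with the conventions `p 0 = 0` and `p (m+1) = N+1`, and the isotropic
condition that no two elements sum to `N+1`. -/
structure IsSSym (N m : ℕ) (p : ℕ → ℕ) : Prop where
  zero : p 0 = 0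
  top : p (m+1) = N+1
  mono : ∀ i j, i < j → j ≤ m+1 → p i < p j
  ub : ∀ i, 1 ≤ i → i ≤ m → p i ≤ N
  iso : ∀ i j, 1 ≤ i → i ≤ m → 1 ≤ j → j ≤ m → p i + p j ≠ N+1

/-- The underlying set `{p 1, …, p m}` of a Schubert symbol. -/
def symSet (m : ℕ) (p : ℕ → ℕ) : Finset ℕ := (Finset.Icc 1 m).image p

/-- Componentwise order `t_i ≤ p_i` on Schubert symbols. -/
def leS (m : ℕ) (t p : ℕ → ℕ) : Prop := ∀ i, 1 ≤ i → i ≤ m → t i ≤ p i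

/-- `c` is a visible cut of the Richardson diagram `D(P,T)`:
`p_i ≤ c < t_{i+1}` for some `0 ≤ i ≤ m`. -/
def visCut (m : ℕ) (p t : ℕ → ℕ) (c : ℕ) : Prop :=
  ∃ i, i ≤ m ∧ p i ≤ c ∧ c < t (i+1)

/-- `c` is an apparent cut of `D(P,T)`: `c` or `N−c` is a visible cut. -/
def appCut (N m : ℕ) (p t : ℕ → ℕ) (c : ℕ) : Prop :=
  visCut m p t c ∨ visCut m p t (N - c)

/-- `c` is a zero column of `D(P,T)`: `p_j < c < t_{j+1}` for some `j`. -/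
def zeroCol (m : ℕ) (p t : ℕ → ℕ) (c : ℕ) : Prop :=
  ∃ j, j ≤ m ∧ p j < c ∧ c < t (j+1)

/-- `(j,c)` is a lone star of `D(P,T)` with respect to the cut predicate `cut`. -/
def loneStar (m : ℕ) (p t : ℕ → ℕ) (cut : ℕ → Prop) (j c : ℕ) : Prop :=
  1 ≤ j ∧ j ≤ m ∧ t j ≤ c ∧ c ≤ p j ∧
    ((c = t j ∧ cut c) ∨ (c = p j ∧ cut (c-1)))

/-- `c ∈ 𝓛_{P,T}` : `c` is a zero column, or column `N+1−c` contains a lone star. -/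
def LSet (N m : ℕ) (p t : ℕ → ℕ) (cut : ℕ → Prop) (c : ℕ) : Prop :=
  1 ≤ c ∧ c ≤ N ∧
    (zeroCol m p t c ∨ ∃ j, loneStar m p t cut j (N+1-c))

/-- `[P] = P ∪ {N+1−p : p ∈ P}`. -/
def brP (N : ℕ) (P : Finset ℕ) : Finset ℕ := P ∪ P.image (fun p => N+1-p)

/-- The type-`D` type function `t(P) ∈ {0,1,2}`: if `n+1 ∈ [P]` it is the parity of
`#([1,n+1] \ P)`; otherwise it is `2`. -/
def tD (n : ℕ) (P : Finset ℕ) : ℕ :=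
  if (n+1) ∈ P ∨ (n+2) ∈ P then (Finset.Icc 1 (n+1) \ P).card % 2 else 2

/-- The type-`D` Bruhat order `T ⪯ P` on Schubert symbols for `OG(m, 2n+2)`. -/
def bruhatD (n m : ℕ) (t p : ℕ → ℕ) : Prop :=
  leS m t p ∧ ∀ c, 1 ≤ c → c ≤ n →
    Finset.Icc (c+1) (n+1) ⊆ brP (2*n+2) (symSet m p) →
    Finset.Icc (c+1) (n+1) ⊆ brP (2*n+2) (symSet m t) →
    ((symSet m p) ∩ Finset.Icc 1 c).card = ((symSet m t) ∩ Finset.Icc 1 c).card →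
    tD n (symSet m p) = tD n (symSet m t)

/-- The exceptional center cut `n+1` exists in `D(P,T)`:
`p_i = n+2 ≤ t_{i+1}` or `t_i = n+1 ≥ p_{i−1}` for some `i`. -/
def centerCut (n m : ℕ) (p t : ℕ → ℕ) : Prop :=
  ∃ i, 1 ≤ i ∧ i ≤ m ∧
    ((p i = n+2 ∧ n+2 ≤ t (i+1)) ∨ (t i = n+1 ∧ p (i-1) ≤ n+1))

/-- `c ∈ [1,n]` is a cut candidate of `D(P,T)`:
`[c+1,n+1] ⊆ [P] ∩ [T]` and `#(T ∩ [1,c]) = #(P ∩ [1,c]) + 1`. -/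
def cutCandidate (n m : ℕ) (p t : ℕ → ℕ) (c : ℕ) : Prop :=
  1 ≤ c ∧ c ≤ n ∧
  Finset.Icc (c+1) (n+1) ⊆ brP (2*n+2) (symSet m p) ∧
  Finset.Icc (c+1) (n+1) ⊆ brP (2*n+2) (symSet m t) ∧
  ((symSet m t) ∩ Finset.Icc 1 c).card = ((symSet m p) ∩ Finset.Icc 1 c).card + 1

/-- Exceptional cuts of `D(P,T)` in type `D`. -/
def excCut (n m : ℕ) (p t : ℕ → ℕ) (c : ℕ) : Prop :=
  (centerCut n m p t ∧ c = n+1) ∨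
  (tD n (symSet m t) ≠ tD n (symSet m p) ∧
    ∃ d, cutCandidate n m p t d ∧ (c = d ∨ c = 2*n+2 - d))

/-- The type-`D` cut set: apparent cuts together with exceptional cuts. -/
def cutD (n m : ℕ) (p t : ℕ → ℕ) (c : ℕ) : Prop :=
  appCut (2*n+2) m p t c ∨ excCut n m p t c

/-- The construction of the Schubert symbol `P'` from `T ⪯ P` in types `B` and `C`. -/
noncomputable def Pp (N m : ℕ) (p t : ℕ → ℕ) (i : ℕ) : ℕ :=
  if p i < t (i+1) then p i
  else if ¬ appCut N m p t (t (i+1) - 1) then t (i+1)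
  else ((Finset.Icc (t i) (t (i+1) - 1)).filter
        (fun c => ¬ LSet N m p t (appCut N m p t) c)).sup id

/-- The modified construction of the Schubert symbol `P̃` from `T ⪯ P` in type `D`. -/
noncomputable def Ptil (n m : ℕ) (p t : ℕ → ℕ) (i : ℕ) : ℕ :=
  if p i < t (i+1) then p i
  else if ¬ cutD n m p t (t (i+1) - 1) then
    (if t (i+1) = n+1 ∨ t (i+1) = n+2 then 2*n+3 - t (i+1) else t (i+1))
  else ((Finset.Icc (t i) (t (i+1) - 1)).filter
        (fun c => ¬ LSet (2*n+2) m p t (cutD n m p t) c)).sup id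

/-- A critical window `[c+1, N−c]` in `D(P,T)` (type `D`, defined when `t(T) ≠ t(P)`):
`c` and `N−c` are visible cuts and `[c+1,n+1] ⊆ [T] ∩ [P]`. -/
def critWindow (n m : ℕ) (p t : ℕ → ℕ) (c : ℕ) : Prop :=
  c ≤ n ∧ tD n (symSet m t) ≠ tD n (symSet m p) ∧
  visCut m p t c ∧ visCut m p t (2*n+2 - c) ∧
  Finset.Icc (c+1) (n+1) ⊆ brP (2*n+2) (symSet m t) ∧
  Finset.Icc (c+1) (n+1) ⊆ brP (2*n+2) (symSet m p)

/-- The quadratic form `f_c = x_1 x_N + … + x_c x_{N+1−c}`. -/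
noncomputable def fquad (N : ℕ) (c : ℕ) (x : ℕ → ℂ) : ℂ := ∑ i ∈ Finset.Icc 1 c, x i * x (N+1-i)

/-- The variety `Z_{P,T}` (affine cone) cut out by quadratic equations `f_c = 0`
for `c` in a prescribed set `Q` and linear equations `x_c = 0` for `c ∈ 𝓛_{P,T}`. -/
def Zvar (N m : ℕ) (p t : ℕ → ℕ) (Q : ℕ → Prop) (cut : ℕ → Prop) : Set (ℕ → ℂ) :=
  {x | (∀ c, Q c → fquad N c x = 0) ∧ ∀ c, LSet N m p t cut c → x c = 0}

namespace IsSSym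

variable {N m : ℕ} {p : ℕ → ℕ}

theorem strictMonoOn (hp : IsSSym N m p) : StrictMonoOn p (Set.Iic (m + 1)) :=
  fun _ _ _ hb hab => hp.mono _ _ hab hb

theorem one_le (hp : IsSSym N m p) {j : ℕ} (hj1 : 1 ≤ j) (hjm : j ≤ m) : 1 ≤ p j := by
  have := hp.mono 0 j hj1 (by omega)
  rw [hp.zero] at this
  omega

theorem apply_ne_reflect (hp : IsSSym N m p) {i j : ℕ} (hi : i ≤ m + 1) (hj1 : 1 ≤ j)
    (hjm : j ≤ m) : p i ≠ N + 1 - p j := by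
  have hpos := hp.one_le hj1 hjm
  have hub := hp.ub j hj1 hjm
  rcases Nat.eq_zero_or_pos i with rfl | hi0
  · rw [hp.zero]
    omega
  rcases hi.lt_or_eq with hi' | rfl
  · have := hp.iso i j hi0 (by omega) hj1 hjm
    omega
  · rw [hp.top]
    omega

end IsSSym

section Cuts

variable {N m : ℕ} {p t : ℕ → ℕ}

theorem not_visCut_of_le_of_lt (hp : IsSSym N m p) (ht : IsSSym N m t) {j c : ℕ}
    (hjm : j ≤ m) (htc : t j ≤ c) (hcp : c < p j) : ¬ visCut m p t c := by
  rintro ⟨i, him, hpi, hti⟩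
  have hij : i < j :=
    (hp.strictMonoOn.lt_iff_lt (Set.mem_Iic.2 (by omega)) (Set.mem_Iic.2 (by omega))).1
      (by omega)
  have hji : j < i + 1 :=
    (ht.strictMonoOn.lt_iff_lt (Set.mem_Iic.2 (by omega)) (Set.mem_Iic.2 (by omega))).1
      (by omega)
  omega

theorem zeroCol_of_visCut_of_ne {x : ℕ} (hx : visCut m p t x) (hpx : ∀ i ≤ m, p i ≠ x) :
    zeroCol m p t x := by
  obtain ⟨i, him, hpi, hti⟩ := hx
  exact ⟨i, him, lt_of_le_of_ne hpi (hpx i him), hti⟩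

theorem zeroCol_of_visCut_pred {x : ℕ} (hx : visCut m p t (x - 1)) (hx1 : 1 ≤ x)
    (htx : ∀ i ≤ m, t (i + 1) ≠ x) : zeroCol m p t x := by
  obtain ⟨i, him, hpi, hti⟩ := hx
  have := htx i him
  exact ⟨i, him, by omega, by omega⟩

end Cuts

theorem stmt_3_general (N m : ℕ) (p t : ℕ → ℕ)
    (hp : IsSSym N m p) (ht : IsSSym N m t)
    (j c : ℕ) (hls : loneStar m p t (appCut N m p t) j c) :
    zeroCol m p t (N+1-c) ∨ (t j = c ∧ p j = c) := by
  obtain ⟨hj1, hjm, htc, hcp, hcase⟩ := hls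
  by_cases hdiag : t j = p j
  · right
    omega
  left
  have htj1 := ht.one_le hj1 hjm
  have hpjN := hp.ub j hj1 hjm
  rcases hcase with ⟨rfl, hcut | hcut⟩ | ⟨rfl, hcut | hcut⟩
  · exact absurd hcut (not_visCut_of_le_of_lt hp ht hjm le_rfl (by omega))
  · exact zeroCol_of_visCut_pred (by rwa [show N + 1 - t j - 1 = N - t j by omega]) (by omega)
      fun i hi => ht.apply_ne_reflect (by omega) hj1 hjm
  · exact absurd hcut (not_visCut_of_le_of_lt hp ht hjm (by omega) (by omega))
  · exact zeroCol_of_visCut_of_ne (by rwa [show N + 1 - p j = N - (p j - 1) by omega])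
      fun i hi => hp.apply_ne_reflect (by omega) hj1 hjm

/-- (types B/C, where cuts are apparent cuts) If `(j,c)` is a lone star of
`D(P,T)` then either `N+1−c` is a zero column or `t_j = p_j = c`. -/
theorem stmt_3 (N m : ℕ) (p t : ℕ → ℕ)
    (hp : IsSSym N m p) (ht : IsSSym N m t) (hle : leS m t p)
    (j c : ℕ) (hls : loneStar m p t (appCut N m p t) j c) :
    zeroCol m p t (N+1-c) ∨ (t j = c ∧ p j = c) :=
  stmt_3_general N m p t hp ht j c hls
end

section
/- Let T ≤ P be Schubert symbols in [1,N] where cuts mean apparent cuts (types B and C). If c ∈ L_{P,T}, then both c and c−1 are cuts of D(P,T). -/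
/-!
Zero columns are flanked by visible cuts. A lone star in column `c'` sits next to a cut on one
side, and the Schubert conditions (monotonicity, `T ≤ P`, isotropy) force the other neighbour
`c' - 1` resp. `c'` to be a cut as well. Since apparent cuts are invariant under `c ↦ N - c`,
the cuts `c'` and `c' - 1` for `c' = N + 1 - c` are exactly the cuts `c - 1` and `c`.
-/

open scoped Classical

namespace IsSSym

variable {N m : ℕ} {p : ℕ → ℕ}

lemma le_of_le (hp : IsSSym N m p) {a b : ℕ} (hab : a ≤ b) (hb : b ≤ m+1) : p a ≤ p b :=
  hab.eq_or_lt.elim (fun h => h ▸ le_rfl) (fun h => (hp.mono a b h hb).le)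

lemma pos (hp : IsSSym N m p) {j : ℕ} (hj : 1 ≤ j) (hjm : j ≤ m) : 0 < p j :=
  hp.zero ▸ hp.mono 0 j hj (by omega)

end IsSSym

section Cuts

variable {N m : ℕ} {p t : ℕ → ℕ}

lemma appCut_sub_iff {c : ℕ} (hc : c ≤ N) :
    appCut N m p t (N - c) ↔ appCut N m p t c := by
  rw [appCut, appCut, Nat.sub_sub_self hc, or_comm]

lemma visCut_and_visCut_sub_one_of_zeroCol {c : ℕ} (h : zeroCol m p t c) :
    visCut m p t c ∧ visCut m p t (c-1) := by
  obtain ⟨j, hjm, hpj, htj⟩ := h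
  exact ⟨⟨j, hjm, hpj.le, htj⟩, ⟨j, hjm, by omega, by omega⟩⟩

/-- A visible cut at `t j` lies in a row `i ≥ j`, which squeezes row `j` to the single box
`p j = t j`; the cut then moves one step left into row `j - 1`. -/
lemma visCut_t_sub_one_of_visCut_t (hp : IsSSym N m p) (ht : IsSSym N m t) (hle : leS m t p)
    {j : ℕ} (hj : 1 ≤ j) (hjm : j ≤ m) (h : visCut m p t (t j)) :
    visCut m p t (t j - 1) := by
  obtain ⟨i, him, hpi, hti⟩ := h
  have hji : j ≤ i := by
    by_contra! hij
    have := ht.le_of_le (show i+1 ≤ j by omega) (by omega)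
    omega
  have hpj_eq : p j = t j := le_antisymm (le_trans (hp.le_of_le hji (by omega)) hpi) (hle j hj hjm)
  have hpj_pred : p (j-1) < p j := hp.mono (j-1) j (by omega) (by omega)
  refine ⟨j-1, by omega, by omega, ?_⟩
  rw [Nat.sub_add_cancel hj]
  have := ht.pos hj hjm
  omega

/-- Dually, the cut lies in a row `i < j`, which squeezes row `j` to `t j = p j`. -/
lemma visCut_p_of_visCut_p_sub_one (hp : IsSSym N m p) (ht : IsSSym N m t) (hle : leS m t p)
    {j : ℕ} (hj : 1 ≤ j) (hjm : j ≤ m) (h : visCut m p t (p j - 1)) :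
    visCut m p t (p j) := by
  obtain ⟨i, him, hpi, hti⟩ := h
  have hpos := hp.pos hj hjm
  have hij : i < j := by
    by_contra! hji
    have := hp.le_of_le hji (by omega)
    omega
  have htj_eq : t j = p j :=
    le_antisymm (hle j hj hjm) (by have := ht.le_of_le (show i+1 ≤ j by omega) (by omega); omega)
  exact ⟨j, hjm, le_rfl, htj_eq ▸ ht.mono j (j+1) (by omega) (by omega)⟩

/-- The only obstruction, `t (i+1) = N + 1 - t j`, is excluded by isotropy of `t`. -/
lemma visCut_add_one_sub_t_of_visCut_sub_t (ht : IsSSym N m t) {j : ℕ} (hj : 1 ≤ j)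
    (hjm : j ≤ m) (h : visCut m p t (N - t j)) : visCut m p t (N + 1 - t j) := by
  obtain ⟨i, him, hpi, hti⟩ := h
  have htjN := ht.ub j hj hjm
  refine ⟨i, him, by omega, ?_⟩
  by_contra! hge
  rcases him.eq_or_lt with rfl | him'
  · have := ht.top
    have := ht.pos hj hjm
    omega
  · exact ht.iso (i+1) j (by omega) (by omega) hj hjm (by omega)

/-- The only obstruction, `p i = N + 1 - p j`, is excluded by isotropy of `p`. -/
lemma visCut_sub_p_of_visCut_add_one_sub_p (hp : IsSSym N m p) {j : ℕ} (hj : 1 ≤ j)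
    (hjm : j ≤ m) (h : visCut m p t (N + 1 - p j)) : visCut m p t (N - p j) := by
  obtain ⟨i, him, hpi, hti⟩ := h
  have hpjN := hp.ub j hj hjm
  refine ⟨i, him, ?_, by omega⟩
  by_contra! hgt
  rcases Nat.eq_zero_or_pos i with rfl | hi
  · rw [hp.zero] at hgt
    omega
  · exact hp.iso i j hi him hj hjm (by omega)

lemma appCut_and_appCut_sub_one_of_loneStar (hp : IsSSym N m p) (ht : IsSSym N m t)
    (hle : leS m t p) {j c : ℕ} (h : loneStar m p t (appCut N m p t) j c) :
    appCut N m p t c ∧ appCut N m p t (c-1) := by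
  obtain ⟨hj, hjm, -, -, ⟨rfl, hcut⟩ | ⟨rfl, hcut⟩⟩ := h
  · have htjN := ht.ub j hj hjm
    refine ⟨hcut, ?_⟩
    rcases hcut with hvis | hvis
    · exact Or.inl (visCut_t_sub_one_of_visCut_t hp ht hle hj hjm hvis)
    · right
      rw [show N - (t j - 1) = N + 1 - t j by have := ht.pos hj hjm; omega]
      exact visCut_add_one_sub_t_of_visCut_sub_t ht hj hjm hvis
  · have hpjN := hp.ub j hj hjm
    refine ⟨?_, hcut⟩
    rcases hcut with hvis | hvis
    · exact Or.inl (visCut_p_of_visCut_p_sub_one hp ht hle hj hjm hvis)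
    · right
      rw [show N - (p j - 1) = N + 1 - p j by have := hp.pos hj hjm; omega] at hvis
      exact visCut_sub_p_of_visCut_add_one_sub_p hp hj hjm hvis

end Cuts

/-- (types B/C) If `c ∈ 𝓛_{P,T}` then both `c` and `c−1`
are (apparent) cuts of `D(P,T)`. -/
theorem stmt_4 (N m : ℕ) (p t : ℕ → ℕ)
    (hp : IsSSym N m p) (ht : IsSSym N m t) (hle : leS m t p)
    (c : ℕ) (hc : LSet N m p t (appCut N m p t) c) :
    appCut N m p t c ∧ appCut N m p t (c-1) := by
  obtain ⟨hc1, hcN, hzero | ⟨j, hstar⟩⟩ := hc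
  · obtain ⟨hvis, hvis'⟩ := visCut_and_visCut_sub_one_of_zeroCol hzero
    exact ⟨Or.inl hvis, Or.inl hvis'⟩
  · obtain ⟨hcut, hcut'⟩ := appCut_and_appCut_sub_one_of_loneStar hp ht hle hstar
    rw [← appCut_sub_iff (show N + 1 - c - 1 ≤ N by omega),
      show N - (N + 1 - c - 1) = c by omega] at hcut'
    rw [← appCut_sub_iff (show N + 1 - c ≤ N by omega),
      show N - (N + 1 - c) = c - 1 by omega] at hcut
    exact ⟨hcut', hcut⟩
end

section
/- Let T ⪯ P be Schubert symbols for an isotropic Grassmannian of type B, C, or D. If c−1 and c both belong to Q_{P,T}, then c ∈ L_{P,T} or N+1−c ∈ L_{P,T}. -/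
open scoped Classical

/-!
Column `c` of the diagram is either a zero column (so `c ∈ 𝓛`) or carries a star. A visible cut
at `c - 1` pins that star to `c = t_i`, and then `(i, c)` is a lone star because `c` is a cut, so
`N + 1 - c ∈ 𝓛`; dually a visible cut at `N + 1 - c` pins the star of column `N + 1 - c` to `p_i`.
When `c - 1` is only an exceptional cut of type `D`, the interval `[c, n + 1]` lies in `[T]`, so
`c` or `N + 1 - c` is some `t_i` outright. At the centre `c = n + 1` of type `D` the cut at `n + 1`
may be missing; there the only configuration without a usable lone star is `n + 1 ∈ T`,
`n + 2 ∈ P`, and a parity count shows it forces `t(T) = t(P)`, contradicting exceptionality.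
-/

section

variable {N m : ℕ} {p t : ℕ → ℕ}

lemma mem_symSet {x : ℕ} : x ∈ symSet m p ↔ ∃ i, 1 ≤ i ∧ i ≤ m ∧ p i = x := by
  simp [symSet, and_assoc]

lemma IsSSym.one_le_s9 (hp : IsSSym N m p) {i : ℕ} (hi : 1 ≤ i) (him : i ≤ m) : 1 ≤ p i := by
  have := hp.mono 0 i hi (by omega)
  rwa [hp.zero] at this

lemma IsSSym.mem_or_reflect_mem_of_mem_brP (hp : IsSSym N m p) {x : ℕ}
    (hx : x ∈ brP N (symSet m p)) : x ∈ symSet m p ∨ N + 1 - x ∈ symSet m p := by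
  rcases Finset.mem_union.1 hx with h | h
  · exact Or.inl h
  · obtain ⟨y, hy, rfl⟩ := Finset.mem_image.1 h
    obtain ⟨i, hi, him, rfl⟩ := mem_symSet.1 hy
    have := hp.ub i hi him
    right
    rwa [Nat.sub_sub_self (by omega)]

lemma appCut_sub {x : ℕ} (hx : x ≤ N) (h : appCut N m p t x) : appCut N m p t (N - x) := by
  rw [appCut, Nat.sub_sub_self hx]
  exact h.symm

lemma appCut_pred_cases {c : ℕ} (h : appCut N m p t (c - 1)) (hc : 1 ≤ c) :
    visCut m p t (c - 1) ∨ visCut m p t (N + 1 - c) := by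
  rwa [appCut, show N - (c - 1) = N + 1 - c by omega] at h

lemma zeroCol_or_eq_t_of_visCut_pred (ht : IsSSym N m t) {c : ℕ} (h : visCut m p t (c - 1))
    (hc : 1 ≤ c) (hcN : c ≤ N) :
    zeroCol m p t c ∨ ∃ i, 1 ≤ i ∧ i ≤ m ∧ p (i - 1) < c ∧ t i = c := by
  obtain ⟨i, him, hpi, hti⟩ := h
  rcases Nat.lt_or_ge c (t (i + 1)) with hlt | hge
  · exact Or.inl ⟨i, him, by omega, hlt⟩
  · have hi : i ≠ m := by
      rintro rfl
      rw [ht.top] at hge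
      omega
    exact Or.inr ⟨i + 1, by omega, by omega, by simpa using (by omega : p i < c), by omega⟩

lemma zeroCol_or_eq_p_of_visCut (hp : IsSSym N m p) {c : ℕ} (h : visCut m p t c) (hc : 1 ≤ c) :
    zeroCol m p t c ∨ ∃ i, 1 ≤ i ∧ i ≤ m ∧ p i = c ∧ c < t (i + 1) := by
  obtain ⟨i, him, hpi, hti⟩ := h
  rcases hpi.lt_or_eq with hlt | heq
  · exact Or.inl ⟨i, him, hlt, hti⟩
  · have hi : i ≠ 0 := by
      rintro rfl
      rw [hp.zero] at heq
      omega
    exact Or.inr ⟨i, by omega, him, heq, hti⟩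

lemma LSet_of_loneStar {cut : ℕ → Prop} {j c e : ℕ} (h : loneStar m p t cut j c) (hc : 1 ≤ c)
    (hcN : c ≤ N) (he : e + c = N + 1) : LSet N m p t cut e :=
  ⟨by omega, by omega, Or.inr ⟨j, by rwa [show N + 1 - e = c by omega]⟩⟩

lemma LSet_of_t_eq (ht : IsSSym N m t) (hle : leS m t p) {cut : ℕ → Prop} {i e : ℕ}
    (hi : 1 ≤ i) (him : i ≤ m) (hcut : cut (t i)) (he : e + t i = N + 1) :
    LSet N m p t cut e :=
  LSet_of_loneStar ⟨hi, him, le_rfl, hle i hi him, Or.inl ⟨rfl, hcut⟩⟩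
    (ht.one_le_s9 hi him) (ht.ub i hi him) he

lemma LSet_of_p_eq (hp : IsSSym N m p) (hle : leS m t p) {cut : ℕ → Prop} {i e : ℕ}
    (hi : 1 ≤ i) (him : i ≤ m) (hcut : cut (p i - 1)) (he : e + p i = N + 1) :
    LSet N m p t cut e :=
  LSet_of_loneStar ⟨hi, him, hle i hi him, le_rfl, Or.inr ⟨rfl, hcut⟩⟩
    (hp.one_le_s9 hi him) (hp.ub i hi him) he

lemma LSet_or_reflect_of_cuts (hp : IsSSym N m p) (ht : IsSSym N m t) (hle : leS m t p)
    {cut : ℕ → Prop} (hsymm : ∀ x ≤ N, cut x → cut (N - x)) {c : ℕ} (hc : 1 ≤ c) (hcN : c ≤ N)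
    (hc1 : cut (c - 1)) (hcut : cut c)
    (hcase : (visCut m p t (c - 1) ∨ visCut m p t (N + 1 - c)) ∨
      c ∈ symSet m t ∨ N + 1 - c ∈ symSet m t) :
    LSet N m p t cut c ∨ LSet N m p t cut (N + 1 - c) := by
  rcases hcase with (h | h) | h | h
  · rcases zeroCol_or_eq_t_of_visCut_pred ht h hc hcN with hz | ⟨i, hi, him, -, rfl⟩
    · exact Or.inl ⟨hc, hcN, Or.inl hz⟩
    · exact Or.inr (LSet_of_t_eq ht hle hi him hcut (by omega))
  · rcases zeroCol_or_eq_p_of_visCut hp h (by omega) with hz | ⟨i, hi, him, hpi, -⟩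
    · exact Or.inr ⟨by omega, by omega, Or.inl hz⟩
    · have hcut' : cut (p i - 1) := by
        rw [hpi, show N + 1 - c - 1 = N - c by omega]
        exact hsymm c hcN hcut
      exact Or.inl (LSet_of_p_eq hp hle hi him hcut' (by omega))
  · obtain ⟨i, hi, him, rfl⟩ := mem_symSet.1 h
    exact Or.inr (LSet_of_t_eq ht hle hi him hcut (by omega))
  · obtain ⟨i, hi, him, hti⟩ := mem_symSet.1 h
    have hcut' : cut (t i) := by
      rw [hti, show N + 1 - c = N - (c - 1) by omega]
      exact hsymm (c - 1) (by omega) hc1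
    exact Or.inl (LSet_of_t_eq ht hle hi him hcut' (by omega))

end

lemma tD_eq_of_card_inter_eq_add_one {n : ℕ} {S T : Finset ℕ} (hT : n + 1 ∈ T)
    (hS : n + 2 ∈ S) (hS' : n + 1 ∉ S)
    (hcard : (T ∩ Finset.Icc 1 n).card = (S ∩ Finset.Icc 1 n).card + 1) : tD n T = tD n S := by
  have hIcc : Finset.Icc 1 (n + 1) = insert (n + 1) (Finset.Icc 1 n) :=
    (Finset.insert_Icc_right_eq_Icc_add_one (by omega)).symm
  have hTcap : (Finset.Icc 1 (n + 1) ∩ T).card = (T ∩ Finset.Icc 1 n).card + 1 := by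
    rw [hIcc, Finset.insert_inter_of_mem hT, Finset.card_insert_of_notMem (by simp),
      Finset.inter_comm]
  have hScap : (Finset.Icc 1 (n + 1) ∩ S).card = (S ∩ Finset.Icc 1 n).card := by
    rw [hIcc, Finset.insert_inter_of_notMem hS', Finset.inter_comm]
  have hT' := Finset.card_sdiff_add_card_inter (Finset.Icc 1 (n + 1)) T
  have hS'' := Finset.card_sdiff_add_card_inter (Finset.Icc 1 (n + 1)) S
  rw [tD, tD, if_pos (Or.inl hT), if_pos (Or.inr hS)]
  omega

section TypeD

variable {n m : ℕ} {p t : ℕ → ℕ}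

lemma cutD_sub {x : ℕ} (hx : x ≤ 2 * n + 2) (h : cutD n m p t x) :
    cutD n m p t (2 * n + 2 - x) := by
  rcases h with h | ⟨hcc, rfl⟩ | ⟨hne, d, hd, hxd⟩
  · exact Or.inl (appCut_sub hx h)
  · exact Or.inr (Or.inl ⟨hcc, by omega⟩)
  · have := hd.2.1
    exact Or.inr (Or.inr ⟨hne, d, hd, by omega⟩)

lemma cutD_pred_cases (ht : IsSSym (2 * n + 2) m t) {c : ℕ} (hc : 1 ≤ c) (hcn : c - 1 ≤ n)
    (h : cutD n m p t (c - 1)) :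
    (visCut m p t (c - 1) ∨ visCut m p t (2 * n + 2 + 1 - c)) ∨
      c ∈ symSet m t ∨ 2 * n + 2 + 1 - c ∈ symSet m t := by
  rcases h with h | ⟨-, h⟩ | ⟨-, d, hd, hcd⟩
  · exact Or.inl (appCut_pred_cases h hc)
  · omega
  · obtain ⟨hd1, hdn, -, hdT, -⟩ := hd
    exact Or.inr (ht.mem_or_reflect_mem_of_mem_brP (hdT (Finset.mem_Icc.2 (by omega))))

lemma centerCut_of_t_eq {i : ℕ} (hi : 1 ≤ i) (him : i ≤ m) (hti : t i = n + 1)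
    (hpi : p (i - 1) < n + 1) : cutD n m p t (n + 1) :=
  Or.inr (Or.inl ⟨⟨i, hi, him, Or.inr ⟨hti, hpi.le⟩⟩, rfl⟩)

lemma centerCut_of_p_eq {i : ℕ} (hi : 1 ≤ i) (him : i ≤ m) (hpi : p i = n + 2)
    (hti : n + 2 < t (i + 1)) : cutD n m p t (n + 1) :=
  Or.inr (Or.inl ⟨⟨i, hi, him, Or.inl ⟨hpi, hti.le⟩⟩, rfl⟩)

lemma LSet_center_of_visCut (hp : IsSSym (2 * n + 2) m p) (ht : IsSSym (2 * n + 2) m t)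
    (hle : leS m t p) (h : visCut m p t n ∨ visCut m p t (n + 2)) :
    LSet (2 * n + 2) m p t (cutD n m p t) (n + 1) ∨
      LSet (2 * n + 2) m p t (cutD n m p t) (n + 2) := by
  rcases h with h | h
  · rcases zeroCol_or_eq_t_of_visCut_pred (c := n + 1) ht h (by omega) (by omega) with
      hz | ⟨i, hi, him, hpi, hti⟩
    · exact Or.inl ⟨by omega, by omega, Or.inl hz⟩
    · have hcut : cutD n m p t (t i) := hti ▸ centerCut_of_t_eq hi him hti hpi
      exact Or.inr (LSet_of_t_eq ht hle hi him hcut (by omega))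
  · rcases zeroCol_or_eq_p_of_visCut hp h (by omega) with hz | ⟨i, hi, him, hpi, hti⟩
    · exact Or.inr ⟨by omega, by omega, Or.inl hz⟩
    · have hcut : cutD n m p t (p i - 1) := by
        rw [hpi]
        exact centerCut_of_p_eq hi him hpi hti
      exact Or.inl (LSet_of_p_eq hp hle hi him hcut (by omega))

lemma LSet_center_of_cutCandidate (hp : IsSSym (2 * n + 2) m p) (ht : IsSSym (2 * n + 2) m t)
    (hle : leS m t p) (hne : tD n (symSet m t) ≠ tD n (symSet m p))
    (hd : cutCandidate n m p t n) :
    LSet (2 * n + 2) m p t (cutD n m p t) (n + 1) ∨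
      LSet (2 * n + 2) m p t (cutD n m p t) (n + 2) := by
  have hn : cutD n m p t n := Or.inr (Or.inr ⟨hne, n, hd, Or.inl rfl⟩)
  obtain ⟨-, -, hdP, hdT, hcard⟩ := hd
  have hcentre : n + 1 ∈ Finset.Icc (n + 1) (n + 1) := by simp
  by_cases hP : n + 1 ∈ symSet m p
  · obtain ⟨i, hi, him, hpi⟩ := mem_symSet.1 hP
    have hcut : cutD n m p t (p i - 1) := by
      rw [hpi]
      exact hn
    exact Or.inr (LSet_of_p_eq hp hle hi him hcut (by omega))
  have hP2 : n + 2 ∈ symSet m p := by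
    simpa [show 2 * n + 2 + 1 - (n + 1) = n + 2 by omega] using
      (hp.mem_or_reflect_mem_of_mem_brP (hdP hcentre)).resolve_left hP
  rcases ht.mem_or_reflect_mem_of_mem_brP (hdT hcentre) with hT | hT
  · exact absurd (tD_eq_of_card_inter_eq_add_one hT hP2 hP hcard) hne
  · obtain ⟨i, hi, him, hti⟩ := mem_symSet.1 hT
    have hcut : cutD n m p t (t i) := by
      rw [hti, show 2 * n + 2 + 1 - (n + 1) = 2 * n + 2 - n by omega]
      exact cutD_sub (by omega) hn
    exact Or.inl (LSet_of_t_eq ht hle hi him hcut (by omega))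

lemma LSet_center_typeD (hp : IsSSym (2 * n + 2) m p) (ht : IsSSym (2 * n + 2) m t)
    (hle : leS m t p) (hn : cutD n m p t n) :
    LSet (2 * n + 2) m p t (cutD n m p t) (n + 1) ∨
      LSet (2 * n + 2) m p t (cutD n m p t) (n + 2) := by
  rcases hn with h | ⟨-, h⟩ | ⟨hne, d, hd, hnd⟩
  · rw [appCut, show 2 * n + 2 - n = n + 2 by omega] at h
    exact LSet_center_of_visCut hp ht hle h
  · omega
  · obtain rfl : n = d := by
      have := hd.2.1
      omega
    exact LSet_center_of_cutCandidate hp ht hle hne hd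

end TypeD

lemma LSet_or_reflect_typeC {n m : ℕ} {p t : ℕ → ℕ} (hp : IsSSym (2 * n) m p)
    (ht : IsSSym (2 * n) m t) (hle : leS m t p) {c : ℕ} (hc : 1 ≤ c)
    (h1 : c - 1 ≤ n ∧ appCut (2 * n) m p t (c - 1)) (h2 : c ≤ n ∧ appCut (2 * n) m p t c) :
    LSet (2 * n) m p t (appCut (2 * n) m p t) c ∨
      LSet (2 * n) m p t (appCut (2 * n) m p t) (2 * n + 1 - c) :=
  LSet_or_reflect_of_cuts hp ht hle (fun _ => appCut_sub) hc (by omega) h1.2 h2.2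
    (Or.inl (appCut_pred_cases h1.2 hc))

lemma LSet_or_reflect_typeB {n m : ℕ} {p t : ℕ → ℕ} (hp : IsSSym (2 * n + 1) m p)
    (ht : IsSSym (2 * n + 1) m t) (hle : leS m t p) {c : ℕ} (hc : 1 ≤ c)
    (h1 : (c - 1 ≤ n ∧ appCut (2 * n + 1) m p t (c - 1)) ∨ c - 1 = n + 1)
    (h2 : (c ≤ n ∧ appCut (2 * n + 1) m p t c) ∨ c = n + 1) :
    LSet (2 * n + 1) m p t (appCut (2 * n + 1) m p t) c ∨
      LSet (2 * n + 1) m p t (appCut (2 * n + 1) m p t) (2 * n + 2 - c) := by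
  have hcn : c ≤ n + 1 := by rcases h2 with h | h <;> omega
  obtain ⟨-, hc1⟩ := h1.resolve_right (by omega)
  have hcut : appCut (2 * n + 1) m p t c := by
    rcases h2 with ⟨-, h⟩ | rfl
    · exact h
    · convert appCut_sub (by omega) hc1 using 1
      omega
  exact LSet_or_reflect_of_cuts hp ht hle (fun _ => appCut_sub) hc (by omega) hc1 hcut
    (Or.inl (appCut_pred_cases hc1 hc))

lemma LSet_or_reflect_typeD {n m : ℕ} {p t : ℕ → ℕ} (hp : IsSSym (2 * n + 2) m p)
    (ht : IsSSym (2 * n + 2) m t) (hbr : bruhatD n m t p) {c : ℕ} (hc : 1 ≤ c)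
    (h1 : (c - 1 ≤ n ∧ cutD n m p t (c - 1)) ∨ c - 1 = n + 1)
    (h2 : (c ≤ n ∧ cutD n m p t c) ∨ c = n + 1) :
    LSet (2 * n + 2) m p t (cutD n m p t) c ∨
      LSet (2 * n + 2) m p t (cutD n m p t) (2 * n + 3 - c) := by
  rcases h2 with ⟨hcn, hcut⟩ | rfl
  · obtain ⟨-, hc1⟩ := h1.resolve_right (by omega)
    exact LSet_or_reflect_of_cuts hp ht hbr.1 (fun _ => cutD_sub) hc (by omega) hc1 hcut
      (cutD_pred_cases ht hc (by omega) hc1)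
  · obtain ⟨-, hn⟩ := h1.resolve_right (by omega)
    rw [show 2 * n + 3 - (n + 1) = n + 2 by omega]
    exact LSet_center_typeD hp ht hbr.1 hn

/-- In each Lie type (C with `N = 2n`, B with `N = 2n+1`, D with `N = 2n+2`),
for Schubert symbols `T ⪯ P`, if `c−1` and `c` both belong to `𝓠_{P,T}`
then `c ∈ 𝓛_{P,T}` or `N+1−c ∈ 𝓛_{P,T}`. -/
theorem stmt_9 :
    -- type C
    (∀ n m : ℕ, ∀ p t : ℕ → ℕ, IsSSym (2*n) m p → IsSSym (2*n) m t → leS m t p →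
      ∀ c, 1 ≤ c →
        (c-1 ≤ n ∧ appCut (2*n) m p t (c-1)) →
        (c ≤ n ∧ appCut (2*n) m p t c) →
        (LSet (2*n) m p t (appCut (2*n) m p t) c ∨
         LSet (2*n) m p t (appCut (2*n) m p t) (2*n+1-c))) ∧
    -- type B
    (∀ n m : ℕ, ∀ p t : ℕ → ℕ, IsSSym (2*n+1) m p → IsSSym (2*n+1) m t → leS m t p →
      ∀ c, 1 ≤ c →
        ((c-1 ≤ n ∧ appCut (2*n+1) m p t (c-1)) ∨ c-1 = n+1) →
        ((c ≤ n ∧ appCut (2*n+1) m p t c) ∨ c = n+1) →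
        (LSet (2*n+1) m p t (appCut (2*n+1) m p t) c ∨
         LSet (2*n+1) m p t (appCut (2*n+1) m p t) (2*n+2-c))) ∧
    -- type D
    (∀ n m : ℕ, ∀ p t : ℕ → ℕ, IsSSym (2*n+2) m p → IsSSym (2*n+2) m t → bruhatD n m t p →
      ∀ c, 1 ≤ c →
        ((c-1 ≤ n ∧ cutD n m p t (c-1)) ∨ c-1 = n+1) →
        ((c ≤ n ∧ cutD n m p t c) ∨ c = n+1) →
        (LSet (2*n+2) m p t (cutD n m p t) c ∨
         LSet (2*n+2) m p t (cutD n m p t) (2*n+3-c))) :=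
  ⟨fun _ _ _ _ => LSet_or_reflect_typeC, fun _ _ _ _ => LSet_or_reflect_typeB,
    fun _ _ _ _ => LSet_or_reflect_typeD⟩
end
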